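/- For all -1 ≤ y_{c1} < y_{c2} ≤ 1 with (y_{c1}, y_{c2}) ≠ (-1, 1), the region-based first-order Sobol' index of input X1 for the region C(y_{c1}, y_{c2}) equals SI_1^{C(y_{c1},y_{c2})} = (|y_{c2}| - |y_{c1}|)^2 / ((y_{c2} - y_{c1})(2 - y_{c2} + y_{c1})). -/

import Mathlib

open MeasureTheory ProbabilityTheory Set

/-- The uniform probability measure on the square [-1,1] × [-1,1]. -/
noncomputable def unifSq : Measure (ℝ × ℝ) :=
  (4 : ENNReal)⁻¹ •
    ((volume.restrict (Icc (-1 : ℝ) 1)).prod (volume.restrict (Icc (-1 : ℝ) 1)))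

/-- sign(x) = 1 if x ≥ 0 and -1 if x < 0. -/
noncomputable def sgn (x : ℝ) : ℝ := if 0 ≤ x then 1 else -1

/-- The model output Y = sign(X1)·|X2|. -/
noncomputable def Ymod (ω : ℝ × ℝ) : ℝ := sgn ω.1 * |ω.2|

/-- The membership indicator 1_C(Y). -/
noncomputable def indC (C : Set ℝ) (ω : ℝ × ℝ) : ℝ := C.indicator 1 (Ymod ω)

/-- Region-based first-order Sobol' index of input X (given as a coordinate map)
for the region C : Var(E[1_C(Y) | X]) / Var(1_C(Y)). -/
noncomputable def SIdx (X : ℝ × ℝ → ℝ) (C : Set ℝ) : ℝ :=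
  variance (unifSq[indC C | MeasurableSpace.comap X inferInstance]) unifSq /
    variance (indC C) unifSq

noncomputable def muI : Measure ℝ := volume.restrict (Icc (-1 : ℝ) 1)

instance : IsFiniteMeasure muI := by
  constructor
  rw [muI, Measure.restrict_apply_univ, Real.volume_Icc]
  exact ENNReal.ofReal_lt_top

lemma muI_univ : muI univ = 2 := by
  rw [muI, Measure.restrict_apply_univ, Real.volume_Icc]; norm_num

lemma unifSq_eq : unifSq = (4 : ENNReal)⁻¹ • (muI.prod muI) := rfl

instance : IsProbabilityMeasure unifSq := by
  constructor
  rw [unifSq_eq, Measure.smul_apply, ← univ_prod_univ, Measure.prod_prod, muI_univ]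
  rw [show (2:ENNReal) * 2 = 4 from by norm_num]
  exact ENNReal.inv_mul_cancel (by norm_num) (by norm_num)

lemma measurable_sgn : Measurable sgn := by
  unfold sgn
  exact Measurable.ite (measurableSet_le measurable_const measurable_id)
    measurable_const measurable_const

lemma measurable_Ymod : Measurable Ymod :=
  (measurable_sgn.comp measurable_fst).mul measurable_snd.abs

lemma measurable_indC {C : Set ℝ} (hC : MeasurableSet C) : Measurable (indC C) :=
  (measurable_one.indicator hC).comp measurable_Ymod

lemma indC_mem {C : Set ℝ} (ω : ℝ × ℝ) : indC C ω ∈ Icc (-1 : ℝ) 1 := by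
  unfold indC
  by_cases h : Ymod ω ∈ C <;> simp [h]

lemma integral_abs_ind {c d : ℝ} (hcd : c ≤ d) (hd : d ≤ 1) :
    ∫ y in Icc (-1 : ℝ) 1, (Icc c d).indicator (1 : ℝ → ℝ) |y|
      = 2 * (max d 0 - max c 0) := by
  have hset : ∀ y : ℝ,
      (Icc (-1:ℝ) 1).indicator (fun y => (Icc c d).indicator (1:ℝ→ℝ) |y|) y
        = (Icc c d ∩ Icc 0 1).indicator (1 : ℝ → ℝ) |y| := by
    intro y
    have hy : y ∈ Icc (-1:ℝ) 1 ↔ |y| ∈ Icc (0:ℝ) 1 := by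
      simp [abs_le, abs_nonneg]
    simp only [Set.indicator_apply, Set.mem_inter_iff]
    by_cases hA : y ∈ Icc (-1:ℝ) 1 <;> by_cases hB : |y| ∈ Icc c d <;>
      simp [hA, hB, hy.mp, (not_iff_not.mpr hy).mp, hy.not.mp]
  rw [← integral_indicator measurableSet_Icc]
  simp only [hset]
  rw [integral_comp_abs (f := fun u => (Icc c d ∩ Icc 0 1).indicator (1:ℝ→ℝ) u)]
  have hs : MeasurableSet (Icc c d ∩ Icc (0:ℝ) 1) := measurableSet_Icc.inter measurableSet_Icc
  rw [integral_indicator_one hs, measureReal_def, Measure.restrict_apply hs]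
  rcases le_or_gt c 0 with hc | hc
  · have hseq : Icc c d ∩ Icc 0 1 ∩ Ioi (0:ℝ) = Ioc 0 d := by
      ext x
      simp only [mem_inter_iff, mem_Icc, mem_Ioi, mem_Ioc]
      constructor
      · rintro ⟨⟨⟨_, hxd⟩, _, _⟩, hx⟩; exact ⟨hx, hxd⟩
      · rintro ⟨hx, hxd⟩
        exact ⟨⟨⟨hc.trans hx.le, hxd⟩, hx.le, hxd.trans hd⟩, hx⟩
    rw [hseq, Real.volume_Ioc]
    rcases le_or_gt 0 d with hd0 | hd0
    · rw [ENNReal.toReal_ofReal (by linarith)]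
      rw [max_eq_left hd0, max_eq_right hc]
    · rw [ENNReal.ofReal_of_nonpos (by linarith)]
      rw [max_eq_right hd0.le, max_eq_right hc]
      simp
  · have hseq : Icc c d ∩ Icc 0 1 ∩ Ioi (0:ℝ) = Icc c d := by
      ext x
      simp only [mem_inter_iff, mem_Icc, mem_Ioi]
      constructor
      · rintro ⟨⟨h, _⟩, _⟩; exact h
      · rintro ⟨hcx, hxd⟩
        exact ⟨⟨⟨hcx, hxd⟩, (hc.le.trans hcx), hxd.trans hd⟩, hc.trans_le hcx⟩
    rw [hseq, Real.volume_Icc, ENNReal.toReal_ofReal (by linarith)]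
    rw [max_eq_left (hc.le.trans hcd), max_eq_left hc.le]

noncomputable def gfun (y1 y2 x : ℝ) : ℝ :=
  if 0 ≤ x then max y2 0 - max y1 0 else max (-y1) 0 - max (-y2) 0

lemma measurable_gfun (y1 y2 : ℝ) : Measurable (gfun y1 y2) := by
  unfold gfun
  exact Measurable.ite (measurableSet_le measurable_const measurable_id)
    measurable_const measurable_const

lemma gfun_mem {y1 y2 : ℝ} (h1 : -1 ≤ y1) (h12 : y1 ≤ y2) (h2 : y2 ≤ 1) (x : ℝ) :
    gfun y1 y2 x ∈ Icc (-1 : ℝ) 1 := by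
  have f1 : max y1 0 ≤ max y2 0 := max_le_max h12 le_rfl
  have f2 : max y2 0 ≤ 1 := max_le h2 zero_le_one
  have f3 : (0:ℝ) ≤ max y1 0 := le_max_right _ _
  have f4 : max (-y2) 0 ≤ max (-y1) 0 := max_le_max (by linarith) le_rfl
  have f5 : max (-y1) 0 ≤ 1 := max_le (by linarith) zero_le_one
  have f6 : (0:ℝ) ≤ max (-y2) 0 := le_max_right _ _
  unfold gfun
  split_ifs <;> rw [mem_Icc] <;> constructor <;> linarith

lemma inner_int {y1 y2 : ℝ} (h1 : -1 ≤ y1) (h12 : y1 ≤ y2) (h2 : y2 ≤ 1) (x : ℝ) :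
    ∫ y, indC (Icc y1 y2) (x, y) ∂muI = 2 * gfun y1 y2 x := by
  rw [muI]
  by_cases hx : 0 ≤ x
  · simp only [indC, Ymod, sgn, if_pos hx, one_mul, gfun]
    exact integral_abs_ind h12 h2
  · simp only [indC, Ymod, sgn, if_neg hx, gfun]
    have key : ∀ y : ℝ, (Icc y1 y2).indicator (1:ℝ→ℝ) (-1 * |y|)
        = (Icc (-y2) (-y1)).indicator (1:ℝ→ℝ) |y| := by
      intro y
      have hiff : (-1 * |y| ∈ Icc y1 y2) ↔ (|y| ∈ Icc (-y2) (-y1)) := by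
        simp only [mem_Icc, neg_one_mul]
        constructor <;> intro h <;> exact ⟨by linarith [h.1, h.2], by linarith [h.1, h.2]⟩
      simp only [Set.indicator_apply, hiff, Pi.one_apply]
    simp only [key]
    exact integral_abs_ind (by linarith) (by linarith)

lemma setIntegral_unifSq (F : ℝ × ℝ → ℝ) (hF : Measurable F) (hFb : ∀ ω, |F ω| ≤ 1)
    {t : Set ℝ} (ht : MeasurableSet t) :
    ∫ ω in Prod.fst ⁻¹' t, F ω ∂unifSq
      = (4 : ℝ)⁻¹ * ∫ x in t, (∫ y, F (x, y) ∂muI) ∂muI := by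
  have hint : Integrable F ((muI.restrict t).prod muI) := by
    refine (integrable_const (1:ℝ)).mono' hF.aestronglyMeasurable ?_
    exact ae_of_all _ fun ω => by simpa using hFb ω
  have hres : ((muI.prod muI).restrict (Prod.fst ⁻¹' t)) = (muI.restrict t).prod muI := by
    rw [← Set.prod_univ, ← Measure.prod_restrict, Measure.restrict_univ]
  rw [unifSq_eq, Measure.restrict_smul, integral_smul_measure, hres, integral_prod _ hint]
  norm_num

lemma integrableOn_ite (u v : ℝ) {s : Set ℝ} (hs : volume s < ⊤) :
    IntegrableOn (fun x : ℝ => if 0 ≤ x then u else v) s := by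
  haveI : IsFiniteMeasure (volume.restrict s) := ⟨by rwa [Measure.restrict_apply_univ]⟩
  have hmeas : Measurable fun x : ℝ => if 0 ≤ x then u else v :=
    Measurable.ite (measurableSet_le measurable_const measurable_id)
      measurable_const measurable_const
  refine (integrable_const (max |u| |v|)).mono' hmeas.aestronglyMeasurable
    (ae_of_all _ fun x => ?_)
  simp only [Real.norm_eq_abs]
  split_ifs
  exacts [le_max_left _ _, le_max_right _ _]

lemma integral_ite_muI (u v : ℝ) :
    ∫ x, (if 0 ≤ x then u else v) ∂muI = u + v := by
  rw [muI, ← Set.Ico_union_Icc_eq_Icc (by norm_num : (-1:ℝ) ≤ 0) (by norm_num : (0:ℝ) ≤ 1)]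
  have hdisj : Disjoint (Ico (-1:ℝ) 0) (Icc 0 1) := by
    rw [Set.disjoint_left]; rintro x hx hx2; exact absurd hx2.1 (not_le.mpr hx.2)
  rw [setIntegral_union hdisj measurableSet_Icc
    (integrableOn_ite u v (by rw [Real.volume_Ico]; exact ENNReal.ofReal_lt_top))
    (integrableOn_ite u v (by rw [Real.volume_Icc]; exact ENNReal.ofReal_lt_top))]
  have e1 : ∫ x in Ico (-1:ℝ) 0, (if 0 ≤ x then u else v) = ∫ _x in Ico (-1:ℝ) 0, v := by
    refine setIntegral_congr_fun measurableSet_Ico fun x hx => ?_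
    rw [if_neg (not_le.mpr hx.2)]
  have e2 : ∫ x in Icc (0:ℝ) 1, (if 0 ≤ x then u else v) = ∫ _x in Icc (0:ℝ) 1, u := by
    refine setIntegral_congr_fun measurableSet_Icc fun x hx => ?_
    rw [if_pos hx.1]
  rw [e1, e2, setIntegral_const, setIntegral_const, measureReal_def, measureReal_def, Real.volume_Ico, Real.volume_Icc]
  norm_num
  ring

lemma integral_ite_unifSq (u v : ℝ) :
    ∫ ω, (if 0 ≤ ω.1 then u else v) ∂unifSq = (u + v) / 2 := by
  have hF : Measurable fun ω : ℝ × ℝ => if 0 ≤ ω.1 then u else v :=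
    Measurable.ite (measurableSet_le measurable_const measurable_fst)
      measurable_const measurable_const
  have hint : Integrable (fun ω : ℝ × ℝ => if 0 ≤ ω.1 then u else v) (muI.prod muI) := by
    refine (integrable_const (max |u| |v|)).mono' hF.aestronglyMeasurable ?_
    refine ae_of_all _ fun ω => ?_
    simp only [Real.norm_eq_abs]
    split_ifs
    · exact le_max_left _ _
    · exact le_max_right _ _
  rw [unifSq_eq, integral_smul_measure, integral_prod _ hint]
  have inner : ∀ x : ℝ, (∫ _y, (if 0 ≤ x then u else v) ∂muI) = 2 * (if 0 ≤ x then u else v) := by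
    intro x
    rw [integral_const, measureReal_def, muI_univ]
    norm_num
  simp only [inner]
  rw [integral_const_mul, integral_ite_muI]
  norm_num
  ring

lemma variance_congr_ae {Ω : Type*} {m : MeasurableSpace Ω} {μ : Measure Ω} {f g : Ω → ℝ}
    (h : f =ᵐ[μ] g) : variance f μ = variance g μ := by
  unfold ProbabilityTheory.variance ProbabilityTheory.evariance
  rw [integral_congr_ae h]
  congr 1
  apply lintegral_congr_ae
  filter_upwards [h] with ω hω
  rw [hω]

lemma indC_abs_le {y1 y2 : ℝ} (ω : ℝ × ℝ) : |indC (Icc y1 y2) ω| ≤ 1 :=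
  abs_le.mpr ⟨(indC_mem ω).1, (indC_mem ω).2⟩

lemma indC_integrable (y1 y2 : ℝ) : Integrable (indC (Icc y1 y2)) unifSq :=
  (integrable_const (1:ℝ)).mono'
    (measurable_indC measurableSet_Icc).aestronglyMeasurable
    (ae_of_all _ fun ω => by simpa using indC_abs_le ω)

set_option maxHeartbeats 1000000 in
lemma condexp_indC {y1 y2 : ℝ} (h1 : -1 ≤ y1) (h12 : y1 ≤ y2) (h2 : y2 ≤ 1) :
    unifSq[indC (Icc y1 y2)|MeasurableSpace.comap (Prod.fst : ℝ × ℝ → ℝ) inferInstance]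
      =ᵐ[unifSq] fun ω : ℝ × ℝ => gfun y1 y2 ω.1 := by
  have hm : MeasurableSpace.comap (Prod.fst : ℝ × ℝ → ℝ) (inferInstance : MeasurableSpace ℝ)
      ≤ (inferInstance : MeasurableSpace (ℝ × ℝ)) := measurable_fst.comap_le
  have hgb : ∀ ω : ℝ × ℝ, |gfun y1 y2 ω.1| ≤ 1 := fun ω =>
    abs_le.mpr ⟨(gfun_mem h1 h12 h2 ω.1).1, (gfun_mem h1 h12 h2 ω.1).2⟩
  have hg_meas : Measurable (fun ω : ℝ × ℝ => gfun y1 y2 ω.1) :=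
    (measurable_gfun y1 y2).comp measurable_fst
  have hg_int : Integrable (fun ω : ℝ × ℝ => gfun y1 y2 ω.1) unifSq :=
    (integrable_const (1:ℝ)).mono' hg_meas.aestronglyMeasurable
      (ae_of_all _ fun ω => by simpa using hgb ω)
  refine (ae_eq_condExp_of_forall_setIntegral_eq hm (indC_integrable y1 y2)
    (fun s _ _ => hg_int.integrableOn) ?_ ?_).symm
  · intro s hs _
    obtain ⟨t, ht, rfl⟩ := MeasurableSpace.measurableSet_comap.mp hs
    rw [setIntegral_unifSq _ hg_meas hgb ht,
      setIntegral_unifSq _ (measurable_indC measurableSet_Icc) (fun ω => indC_abs_le ω) ht]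
    congr 1
    refine integral_congr_ae (ae_of_all _ fun x => ?_)
    show (∫ _y : ℝ, gfun y1 y2 x ∂muI) = ∫ y : ℝ, indC (Icc y1 y2) (x, y) ∂muI
    rw [inner_int h1 h12 h2 x, integral_const, measureReal_def, muI_univ]
    norm_num
  · exact ((measurable_gfun y1 y2).comp
      (Measurable.of_comap_le le_rfl)).stronglyMeasurable.aestronglyMeasurable

lemma abs_eq_max_add (t : ℝ) : |t| = max t 0 + max (-t) 0 := by
  rcases le_total 0 t with h | h
  · rw [abs_of_nonneg h, max_eq_left h, max_eq_right (neg_nonpos.mpr h)]; ring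
  · rw [abs_of_nonpos h, max_eq_right h, max_eq_left (neg_nonneg.mpr h)]; ring

lemma self_eq_max_sub (t : ℝ) : t = max t 0 - max (-t) 0 := by
  rcases le_total 0 t with h | h
  · rw [max_eq_left h, max_eq_right (neg_nonpos.mpr h)]; ring
  · rw [max_eq_right h, max_eq_left (neg_nonneg.mpr h)]; ring

lemma integral_indC {y1 y2 : ℝ} (h1 : -1 ≤ y1) (h12 : y1 ≤ y2) (h2 : y2 ≤ 1) :
    ∫ ω, indC (Icc y1 y2) ω ∂unifSq
      = ((max y2 0 - max y1 0) + (max (-y1) 0 - max (-y2) 0)) / 2 := by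
  have h := setIntegral_unifSq (indC (Icc y1 y2)) (measurable_indC measurableSet_Icc)
    (fun ω => indC_abs_le ω) MeasurableSet.univ
  rw [preimage_univ, Measure.restrict_univ, Measure.restrict_univ] at h
  rw [h]
  have : ∀ x : ℝ, (∫ y, indC (Icc y1 y2) (x, y) ∂muI) = 2 * gfun y1 y2 x :=
    inner_int h1 h12 h2
  simp only [this]
  rw [integral_const_mul]
  simp only [gfun]
  rw [integral_ite_muI]
  ring

lemma integral_gfun (y1 y2 : ℝ) :
    ∫ ω, gfun y1 y2 ω.1 ∂unifSq
      = ((max y2 0 - max y1 0) + (max (-y1) 0 - max (-y2) 0)) / 2 := by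
  simp only [gfun]
  exact integral_ite_unifSq _ _

lemma indC_sq {y1 y2 : ℝ} : (indC (Icc y1 y2)) ^ 2 = indC (Icc y1 y2) := by
  funext ω
  simp only [Pi.pow_apply, indC]
  by_cases h : Ymod ω ∈ Icc y1 y2 <;> simp [h]

lemma variance_indC {y1 y2 : ℝ} (h1 : -1 ≤ y1) (h12 : y1 ≤ y2) (h2 : y2 ≤ 1) :
    variance (indC (Icc y1 y2)) unifSq
      = (((max y2 0 - max y1 0) + (max (-y1) 0 - max (-y2) 0)) / 2)
        - (((max y2 0 - max y1 0) + (max (-y1) 0 - max (-y2) 0)) / 2) ^ 2 := by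
  have hmem : MemLp (indC (Icc y1 y2)) 2 unifSq :=
    memLp_of_bounded (ae_of_all _ fun (ω : ℝ × ℝ) => indC_mem ω)
      (measurable_indC measurableSet_Icc).aestronglyMeasurable 2
  rw [variance_eq_sub hmem, indC_sq, integral_indC h1 h12 h2]

lemma variance_gfun {y1 y2 : ℝ} (h1 : -1 ≤ y1) (h12 : y1 ≤ y2) (h2 : y2 ≤ 1) :
    variance (fun ω : ℝ × ℝ => gfun y1 y2 ω.1) unifSq
      = ((max y2 0 - max y1 0) ^ 2 + (max (-y1) 0 - max (-y2) 0) ^ 2) / 2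
        - (((max y2 0 - max y1 0) + (max (-y1) 0 - max (-y2) 0)) / 2) ^ 2 := by
  have hmem : MemLp (fun ω : ℝ × ℝ => gfun y1 y2 ω.1) 2 unifSq :=
    memLp_of_bounded (ae_of_all _ fun (ω : ℝ × ℝ) => gfun_mem h1 h12 h2 ω.1)
      ((measurable_gfun y1 y2).comp measurable_fst).aestronglyMeasurable 2
  rw [variance_eq_sub hmem]
  have hsq : (fun ω : ℝ × ℝ => gfun y1 y2 ω.1) ^ 2
      = fun ω : ℝ × ℝ => if 0 ≤ ω.1 then (max y2 0 - max y1 0) ^ 2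
        else (max (-y1) 0 - max (-y2) 0) ^ 2 := by
    funext ω
    simp only [Pi.pow_apply, gfun]
    rw [apply_ite (fun t : ℝ => t ^ 2)]
  rw [hsq, integral_ite_unifSq, integral_gfun]

theorem stmt10 (y1 y2 : ℝ) (h1 : -1 ≤ y1) (h12 : y1 < y2) (h2 : y2 ≤ 1)
    (hne : (y1, y2) ≠ (-1, 1)) :
    SIdx Prod.fst (Icc y1 y2) = (|y2| - |y1|) ^ 2 / ((y2 - y1) * (2 - y2 + y1)) := by
  rw [SIdx, variance_congr_ae (condexp_indC h1 h12.le h2),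
    variance_gfun h1 h12.le h2, variance_indC h1 h12.le h2]
  set a := max y2 0 - max y1 0 with ha
  set b := max (-y1) 0 - max (-y2) 0 with hb
  have hdiff : |y2| - |y1| = a - b := by
    rw [abs_eq_max_add y2, abs_eq_max_add y1, ha, hb]; ring
  have hsum : y2 - y1 = a + b := by
    rw [ha, hb]
    linarith [self_eq_max_sub y2, self_eq_max_sub y1]
  rw [hdiff, hsum, show 2 - y2 + y1 = 2 - (a + b) by linarith]
  have hnum : (a ^ 2 + b ^ 2) / 2 - ((a + b) / 2) ^ 2 = (a - b) ^ 2 / 4 := by ring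
  have hden : (a + b) / 2 - ((a + b) / 2) ^ 2 = ((a + b) * (2 - (a + b))) / 4 := by ring
  rw [hnum, hden]
  rcases eq_or_ne ((a + b) * (2 - (a + b))) 0 with h0 | h0
  · rw [h0]; simp
  · field_simp
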